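/- Let S₀ be a sine-type function of type b with asymptotically separated zeros {z_n^0}_{n≥1}, let {κ_n}_{n≥1} ∈ l₂, and set z_n := z_n^0 + κ_n. Then for every δ > 0 the infinite product G(z) := ∏_{n=1}^{∞} (z − z_n^0)/(z − z_n) is uniformly bounded on the set {z ∈ ℂ : dist(z, {z_n}_{n≥1}) ≥ δ}; i.e., there exists a constant C (depending on δ and the data) with |G(z)| ≤ C for all such z. -/

import Mathlib

open MeasureTheory Complex Set
open scoped ENNReal Real Classical

/-- The order of the zero of `f` at `z` (with junk value `0` if `f` is not analytic at `z`). -/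
noncomputable def zeroOrder (f : ℂ → ℂ) (z : ℂ) : ℕ∞ :=
  if _h : AnalyticAt ℂ f z then analyticOrderAt f z else 0

/-- The sequence `zs` enumerates all the zeros of `f`, counted with multiplicity. -/
def EnumeratesZeros (f : ℂ → ℂ) (zs : ℕ → ℂ) : Prop :=
  ∀ z : ℂ, {n | zs n = z}.Finite ∧ zeroOrder f z = ({n | zs n = z}.ncard : ℕ∞)

/-- `f` is of exponential type. -/
def ExpType (f : ℂ → ℂ) : Prop :=
  ∃ A B : ℝ, ∀ z : ℂ, ‖f z‖ ≤ A * Real.exp (B * ‖z‖)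

/-- `S0` is a sine-type function of type `b`: an entire function of exponential type
satisfying the two-sided bound (6). -/
def IsSineType (b : ℝ) (S0 : ℂ → ℂ) : Prop :=
  Differentiable ℂ S0 ∧ ExpType S0 ∧
    ∃ c C K : ℝ, 0 < c ∧ 0 < C ∧ 0 < K ∧ ∀ z : ℂ, K < |z.im| →
      c < ‖S0 z‖ * Real.exp (-b * |z.im|) ∧ ‖S0 z‖ * Real.exp (-b * |z.im|) < C

/-- The sequence `z0` is asymptotically separated:
`inf |z0 n - z0 k| > 0` over `n ≠ k` with `n, k` sufficiently large. -/
def AsympSeparated (z0 : ℕ → ℂ) : Prop :=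
  ∃ n₀ : ℕ, ∃ d : ℝ, 0 < d ∧ ∀ n k : ℕ, n₀ ≤ n → n₀ ≤ k → n ≠ k → d ≤ ‖z0 n - z0 k‖

/-- The transform `∫_{-b}^{b} w(x) e^{izx} dx`. -/
noncomputable def fourierPart (b : ℝ) (w : ℝ → ℂ) (z : ℂ) : ℂ :=
  ∫ x in (-b)..b, w x * Complex.exp (Complex.I * z * x)

/-- `μ_n` from (9): `μ n = z0 n` if `z0 n ≠ 0` and `μ n = -1` otherwise.
Here the index `n : ℕ` corresponds to the index `n + 1 - N` of the paper. -/
noncomputable def mu (z0 : ℕ → ℂ) (n : ℕ) : ℂ := if z0 n = 0 then -1 else z0 n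

/-
The zeros `z_n⁰` of a sine-type function lie in a horizontal strip, and an `l₂` perturbation
keeps the `z_n` in a (wider) strip and eventually separated. Cutting the strip into squares of
side comparable to the separation, each square contains at most one `z_n` and the squares
whose real coordinate lies at distance `≈ k` from `Re z` are boundedly many, so
`∑ |z - z_n|⁻² ≤ C` uniformly in `z` with `dist(z, {z_n}) ≥ δ`. Since
`(z - z_n⁰)/(z - z_n) = 1 + κ_n/(z - z_n)`, the product is then bounded by
`exp ∑ |κ_n|/|z - z_n| ≤ exp ((∑ |κ_n|² + C)/2)`.
-/

open Filter Topology

lemma EnumeratesZeros.apply_eq_zero {f : ℂ → ℂ} {zs : ℕ → ℂ} (h : EnumeratesZeros f zs)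
    {n : ℕ} (hf : AnalyticAt ℂ f (zs n)) : f (zs n) = 0 := by
  by_contra hne
  obtain ⟨hfin, hord⟩ := h (zs n)
  have hzero : zeroOrder f (zs n) = 0 := by
    rw [zeroOrder, dif_pos hf, analyticOrderAt_eq_zero]
    exact Or.inr hne
  rw [hzero, eq_comm, Nat.cast_eq_zero, Set.ncard_eq_zero hfin] at hord
  exact (Set.mem_empty_iff_false n).mp (hord ▸ rfl)

lemma IsSineType.exists_abs_im_le_of_eq_zero {b : ℝ} {S : ℂ → ℂ} (hS : IsSineType b S) :
    ∃ K : ℝ, ∀ z : ℂ, S z = 0 → |z.im| ≤ K := by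
  obtain ⟨-, -, c, C, K, hc, -, -, hbound⟩ := hS
  refine ⟨K, fun z hz => le_of_not_gt fun hK => ?_⟩
  have := (hbound z hK).1
  rw [hz, norm_zero, zero_mul] at this
  exact hc.not_gt this

lemma AsympSeparated.add_of_tendsto_zero {z0 κ : ℕ → ℂ} (hsep : AsympSeparated z0)
    (hκ : Tendsto κ atTop (𝓝 0)) : AsympSeparated (fun n => z0 n + κ n) := by
  obtain ⟨n₀, d, hd, hd_le⟩ := hsep
  obtain ⟨N, hN⟩ := eventually_atTop.mp
    ((tendsto_zero_iff_norm_tendsto_zero.mp hκ).eventually_lt_const (by positivity : 0 < d / 4))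
  refine ⟨max n₀ N, d / 2, by positivity, fun m n hm hn hmn => ?_⟩
  have h0 := hd_le m n (le_of_max_le_left hm) (le_of_max_le_left hn) hmn
  have hκm := hN m (le_of_max_le_right hm)
  have hκn := hN n (le_of_max_le_right hn)
  have hsplit : z0 m - z0 n = (z0 m + κ m - (z0 n + κ n)) + (κ n - κ m) := by ring
  have := hsplit ▸ norm_add_le (z0 m + κ m - (z0 n + κ n)) (κ n - κ m)
  linarith [norm_sub_le (κ n) (κ m)]

section StripSum

variable {s : ℝ}

lemma mul_abs_floor_div_sub_one_le (hs : 0 < s) (x : ℝ) :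
    s * (|(⌊x / s⌋ : ℝ)| - 1) ≤ |x| := by
  have hlo : (⌊x / s⌋ : ℝ) * s ≤ x := (le_div_iff₀ hs).mp (Int.floor_le _)
  have hhi : x < ((⌊x / s⌋ : ℝ) + 1) * s := (div_lt_iff₀ hs).mp (Int.lt_floor_add_one _)
  rcases abs_cases (⌊x / s⌋ : ℝ) with ⟨ha, _⟩ | ⟨ha, _⟩ <;> rcases abs_cases x with ⟨hx, _⟩ | ⟨hx, _⟩ <;>
    rw [ha, hx] <;> nlinarith

lemma norm_sub_lt_of_floor_div_eq (hs : 0 < s) {p q z : ℂ}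
    (hre : ⌊(p - z).re / s⌋ = ⌊(q - z).re / s⌋) (him : ⌊p.im / s⌋ = ⌊q.im / s⌋) :
    ‖p - q‖ < 2 * s := by
  have key : ∀ {x y : ℝ}, ⌊x / s⌋ = ⌊y / s⌋ → |x - y| < s := fun h => by
    simpa [← sub_div, abs_div, abs_of_pos hs, div_lt_one hs] using
      Int.abs_sub_lt_one_of_floor_eq_floor h
  have hre' : (p - q).re = (p - z).re - (q - z).re := by simp
  calc ‖p - q‖ ≤ |(p - q).re| + |(p - q).im| := Complex.norm_le_abs_re_add_abs_im _
    _ < s + s := by rw [hre', Complex.sub_im]; exact add_lt_add (key hre) (key him)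
    _ = 2 * s := by ring

lemma floor_div_mem_Icc (hs : 0 < s) {H x : ℝ} (hx : |x| ≤ H) :
    ⌊x / s⌋ ∈ Finset.Icc (-⌈H / s⌉) ⌈H / s⌉ := by
  obtain ⟨hlo, hhi⟩ := abs_le.mp hx
  rw [Finset.mem_Icc, ← Int.floor_neg, ← neg_div]
  exact ⟨Int.floor_mono (div_le_div_of_nonneg_right hlo hs.le),
    (Int.floor_mono (div_le_div_of_nonneg_right hhi hs.le)).trans (Int.floor_le_ceil _)⟩

noncomputable def stripWeight (s δ : ℝ) (a : ℤ) : ℝ :=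
  (max δ (s * (|(a : ℝ)| - 1)) ^ 2)⁻¹

lemma stripWeight_nonneg (s δ : ℝ) (a : ℤ) : 0 ≤ stripWeight s δ a := by
  unfold stripWeight; positivity

lemma inv_sq_norm_le_stripWeight (hs : 0 < s) {δ : ℝ} (hδ : 0 < δ) {u : ℂ} (hu : δ ≤ ‖u‖) :
    (‖u‖ ^ 2)⁻¹ ≤ stripWeight s δ ⌊u.re / s⌋ := by
  have hre := (mul_abs_floor_div_sub_one_le hs u.re).trans (Complex.abs_re_le_norm u)
  exact inv_anti₀ (pow_pos (lt_max_of_lt_left hδ) 2)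
    (pow_le_pow_left₀ (le_max_of_le_left hδ.le) (max_le hu hre) 2)

lemma summable_stripWeight (hs : 0 < s) {δ : ℝ} (hδ : 0 < δ) : Summable (stripWeight s δ) := by
  set m := min δ s
  have hm : 0 < m := lt_min hδ hs
  refine .of_norm_bounded_eventually
    ((Real.summable_one_div_int_pow.mpr one_lt_two).mul_left (4 / m ^ 2)) ?_
  filter_upwards [eventually_cofinite_ne 0] with a ha
  have ha1 : (1 : ℝ) ≤ |(a : ℝ)| := by
    rw [← Int.cast_abs, ← Int.cast_one, Int.cast_le]; exact Int.one_le_abs ha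
  have hlow : m * |(a : ℝ)| / 2 ≤ max δ (s * (|(a : ℝ)| - 1)) := by
    rcases le_total |(a : ℝ)| 2 with h2 | h2
    · exact le_max_of_le_left (by nlinarith [min_le_left δ s])
    · exact le_max_of_le_right (by nlinarith [min_le_right δ s])
  rw [Real.norm_of_nonneg (stripWeight_nonneg s δ a), stripWeight]
  calc (max δ (s * (|(a : ℝ)| - 1)) ^ 2)⁻¹ ≤ ((m * |(a : ℝ)| / 2) ^ 2)⁻¹ :=
        inv_anti₀ (by positivity) (pow_le_pow_left₀ (by positivity) hlow 2)
    _ = 4 / m ^ 2 * (1 / (a : ℝ) ^ 2) := by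
        rw [div_pow, mul_pow, sq_abs]; field_simp; norm_num

end StripSum

lemma exists_sum_inv_sq_norm_sub_le_of_pairwise {ι : Type*} {H d δ : ℝ} (hd : 0 < d)
    (hδ : 0 < δ) : ∃ C : ℝ, ∀ (w : ι → ℂ) (F : Finset ι), (∀ i ∈ F, |(w i).im| ≤ H) →
      (F : Set ι).Pairwise (fun i j => d ≤ ‖w i - w j‖) →
      ∀ z : ℂ, (∀ i ∈ F, δ ≤ ‖z - w i‖) → ∑ i ∈ F, (‖z - w i‖ ^ 2)⁻¹ ≤ C := by
  set s := d / 2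
  have hs : 0 < s := by positivity
  set I := Finset.Icc (-⌈H / s⌉) ⌈H / s⌉
  refine ⟨I.card * ∑' a, stripWeight s δ a, fun w F hH hsep z hδF => ?_⟩
  -- Squares of side `s = d / 2`, real coordinate measured from `Re z`: each holds at most one
  -- `w i`, and only `I.card` of them share a column.
  let square : ι → ℤ × ℤ := fun i => (⌊(w i - z).re / s⌋, ⌊(w i).im / s⌋)
  have hinj : Set.InjOn square F := fun i hi j hj hij => by
    by_contra hne
    have := norm_sub_lt_of_floor_div_eq hs (congrArg Prod.fst hij) (congrArg Prod.snd hij)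
    linarith [hsep hi hj hne, show 2 * s = d by ring]
  have hsub : F.image square ⊆ ((F.image square).image Prod.fst) ×ˢ I := fun q hq => by
    obtain ⟨i, hi, rfl⟩ := Finset.mem_image.mp hq
    exact Finset.mem_product.mpr ⟨Finset.mem_image_of_mem _ hq, floor_div_mem_Icc hs (hH i hi)⟩
  calc ∑ i ∈ F, (‖z - w i‖ ^ 2)⁻¹ ≤ ∑ i ∈ F, stripWeight s δ (square i).1 :=
        Finset.sum_le_sum fun i hi => by
          have hδi := hδF i hi
          rw [norm_sub_rev] at hδi ⊢
          exact inv_sq_norm_le_stripWeight hs hδ hδi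
    _ = ∑ q ∈ F.image square, stripWeight s δ q.1 := by rw [Finset.sum_image hinj]
    _ ≤ ∑ q ∈ ((F.image square).image Prod.fst) ×ˢ I, stripWeight s δ q.1 :=
        Finset.sum_le_sum_of_subset_of_nonneg hsub fun q _ _ => stripWeight_nonneg s δ q.1
    _ = I.card * ∑ a ∈ (F.image square).image Prod.fst, stripWeight s δ a := by
        rw [Finset.sum_product, Finset.mul_sum]
        simp only [Finset.sum_const, nsmul_eq_mul]
    _ ≤ I.card * ∑' a, stripWeight s δ a := by
        gcongr
        exact (summable_stripWeight hs hδ).sum_le_tsum _ fun a _ => stripWeight_nonneg s δ a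

lemma AsympSeparated.exists_tsum_inv_sq_norm_sub_le {w : ℕ → ℂ} (hw : AsympSeparated w)
    {H : ℝ} (hH : ∀ n, |(w n).im| ≤ H) {δ : ℝ} (hδ : 0 < δ) :
    ∃ C : ℝ, ∀ z : ℂ, (∀ n, δ ≤ ‖z - w n‖) →
      Summable (fun n => (‖z - w n‖ ^ 2)⁻¹) ∧ ∑' n, (‖z - w n‖ ^ 2)⁻¹ ≤ C := by
  obtain ⟨N, d, hd, hsep⟩ := hw
  obtain ⟨C, hC⟩ := exists_sum_inv_sq_norm_sub_le_of_pairwise (ι := ℕ) (H := H) hd hδ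
  have hbound : ∀ z : ℂ, (∀ n, δ ≤ ‖z - w n‖) → ∀ F : Finset ℕ,
      ∑ n ∈ F, (‖z - w n‖ ^ 2)⁻¹ ≤ N * (δ ^ 2)⁻¹ + C := fun z hz F => by
    rw [← Finset.sum_filter_add_sum_filter_not F (· < N)]
    refine add_le_add ?_ (hC w _ (fun n _ => hH n) ?_ z fun n _ => hz n)
    · calc _ ≤ (F.filter (· < N)).card • (δ ^ 2)⁻¹ := Finset.sum_le_card_nsmul _ _ _
            fun n _ => inv_anti₀ (by positivity) (pow_le_pow_left₀ hδ.le (hz n) 2)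
        _ ≤ N * (δ ^ 2)⁻¹ := by
            rw [nsmul_eq_mul]
            gcongr
            simpa using Finset.card_le_card
              fun n hn => Finset.mem_range.mpr (Finset.mem_filter.mp hn).2
    · intro m hm n hn hmn
      exact hsep m n (not_lt.mp (Finset.mem_filter.mp hm).2)
        (not_lt.mp (Finset.mem_filter.mp hn).2) hmn
  refine ⟨N * (δ ^ 2)⁻¹ + C, fun z hz => ?_⟩
  have hsum := summable_of_sum_le (fun n => by positivity) (hbound z hz)
  exact ⟨hsum, hsum.tsum_le_of_sum_le (hbound z hz)⟩

lemma norm_tprod_one_add_le_exp_tsum {ι R : Type*} [NormedCommRing R] [NormOneClass R]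
    {f : ι → R} (hf : Summable (fun i => ‖f i‖)) :
    ‖∏' i, (1 + f i)‖ ≤ Real.exp (∑' i, ‖f i‖) := by
  by_cases hmul : Multipliable (fun i => 1 + f i)
  · refine le_of_tendsto' ((continuous_norm.tendsto _).comp hmul.hasProd) fun F => ?_
    calc ‖∏ i ∈ F, (1 + f i)‖ ≤ ‖∏ i ∈ F, (1 + f i) - 1‖ + ‖(1 : R)‖ := norm_le_norm_sub_add _ _
      _ ≤ Real.exp (∑ i ∈ F, ‖f i‖) := by
          linarith [F.norm_prod_one_add_sub_one_le f, norm_one (α := R)]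
      _ ≤ Real.exp (∑' i, ‖f i‖) :=
          Real.exp_le_exp.mpr (hf.sum_le_tsum F fun i _ => norm_nonneg _)
  · rw [tprod_eq_one_of_not_multipliable hmul, norm_one]
    exact Real.one_le_exp (tsum_nonneg fun i => norm_nonneg _)

lemma norm_div_le_add_inv_sq_div_two {𝕜 : Type*} [NormedDivisionRing 𝕜] (a b : 𝕜) :
    ‖a / b‖ ≤ (‖a‖ ^ 2 + (‖b‖ ^ 2)⁻¹) / 2 := by
  rw [norm_div, div_eq_mul_inv, ← inv_pow]
  linarith [two_mul_le_add_sq ‖a‖ ‖b‖⁻¹]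

theorem product_G_uniformly_bounded_general
    (b : ℝ)
    (S0 : ℂ → ℂ) (hS0 : IsSineType b S0)
    (z0 : ℕ → ℂ) (hz0 : EnumeratesZeros S0 z0) (hsep : AsympSeparated z0)
    (κ : ℕ → ℂ) (hκ : Summable (fun n => ‖κ n‖ ^ 2))
    (zn : ℕ → ℂ) (hzn : ∀ n : ℕ, zn n = z0 n + κ n)
    (δ : ℝ) (hδ : 0 < δ) :
    ∃ C : ℝ, 0 < C ∧ ∀ z : ℂ, (∀ n : ℕ, δ ≤ dist z (zn n)) →
      Multipliable (fun n : ℕ => (z - z0 n) / (z - zn n)) ∧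
      ‖∏' n : ℕ, (z - z0 n) / (z - zn n)‖ ≤ C := by
  obtain rfl : zn = fun n => z0 n + κ n := funext hzn
  obtain ⟨K, hK⟩ := hS0.exists_abs_im_le_of_eq_zero
  have hκ0 : Tendsto κ atTop (𝓝 0) := by
    rw [tendsto_zero_iff_norm_tendsto_zero]
    simpa using hκ.tendsto_atTop_zero.sqrt
  obtain ⟨B, hB⟩ := (tendsto_zero_iff_norm_tendsto_zero.mp hκ0).bddAbove_range
  have hstrip : ∀ n, |(z0 n + κ n).im| ≤ K + B := fun n =>
    (abs_add_le _ _).trans (add_le_add (hK _ (hz0.apply_eq_zero (hS0.1.analyticAt _)))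
      ((Complex.abs_im_le_norm _).trans (hB ⟨n, rfl⟩)))
  obtain ⟨C, hC⟩ := (hsep.add_of_tendsto_zero hκ0).exists_tsum_inv_sq_norm_sub_le hstrip hδ
  refine ⟨Real.exp ((∑' n, ‖κ n‖ ^ 2 + C) / 2), Real.exp_pos _, fun z hz => ?_⟩
  obtain ⟨hsum, hle⟩ := hC z fun n => (dist_eq_norm z _).symm ▸ hz n
  have hfac : ∀ n, (z - z0 n) / (z - (z0 n + κ n)) = 1 + κ n / (z - (z0 n + κ n)) := fun n => by
    have hne : z - (z0 n + κ n) ≠ 0 := norm_pos_iff.mp (hδ.trans_le ((dist_eq_norm z _) ▸ hz n))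
    field_simp
    ring
  have hmaj := fun n => norm_div_le_add_inv_sq_div_two (κ n) (z - (z0 n + κ n))
  have hsumw := Summable.of_nonneg_of_le (fun n => norm_nonneg _) hmaj ((hκ.add hsum).div_const 2)
  simp only [hfac]
  refine ⟨multipliable_one_add_of_summable hsumw,
    (norm_tprod_one_add_le_exp_tsum hsumw).trans (Real.exp_le_exp.mpr ?_)⟩
  calc ∑' n, ‖κ n / (z - (z0 n + κ n))‖
      ≤ ∑' n, (‖κ n‖ ^ 2 + (‖z - (z0 n + κ n)‖ ^ 2)⁻¹) / 2 :=
        hsumw.tsum_le_tsum hmaj ((hκ.add hsum).div_const 2)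
    _ = (∑' n, ‖κ n‖ ^ 2 + ∑' n, (‖z - (z0 n + κ n)‖ ^ 2)⁻¹) / 2 := by
        rw [tsum_div_const, hκ.tsum_add hsum]
    _ ≤ (∑' n, ‖κ n‖ ^ 2 + C) / 2 := by linarith

/-- The infinite product `G(z) = ∏_n (z - z_n⁰)/(z - z_n)`, where `z_n = z_n⁰ + κ_n`
with `{κ_n} ∈ l₂` and `{z_n⁰}` the asymptotically separated zeros of a sine-type
function, is uniformly bounded on `{z : dist(z, {z_n}) ≥ δ}`. -/
theorem product_G_uniformly_bounded
    (b : ℝ) (hb : 0 < b)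
    (S0 : ℂ → ℂ) (hS0 : IsSineType b S0)
    (z0 : ℕ → ℂ) (hz0 : EnumeratesZeros S0 z0) (hsep : AsympSeparated z0)
    (κ : ℕ → ℂ) (hκ : Summable (fun n => ‖κ n‖ ^ 2))
    (zn : ℕ → ℂ) (hzn : ∀ n : ℕ, zn n = z0 n + κ n)
    (δ : ℝ) (hδ : 0 < δ) :
    ∃ C : ℝ, 0 < C ∧ ∀ z : ℂ, (∀ n : ℕ, δ ≤ dist z (zn n)) →
      Multipliable (fun n : ℕ => (z - z0 n) / (z - zn n)) ∧
      ‖∏' n : ℕ, (z - z0 n) / (z - zn n)‖ ≤ C :=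
  product_G_uniformly_bounded_general b S0 hS0 z0 hz0 hsep κ hκ zn hzn δ hδ
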